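/- Define S_{C1,C2}(x) = Σ_{m,n≥0} q^{6·C(m+1,2)+2·C(n+1,2)+2mn+C1·m+C2·n} x^{2m+n} / ((q²;q²)_m (q;q)_n). Then the following system holds: S_{−4,−1}(x) = S_{−4,−1}(xq) + xq S_{−2,0}(xq) + x²q² S_{0,0}(xq); S_{−2,−1}(x) = S_{−4,−1}(xq) + xq S_{−2,0}(xq); S_{−2,0}(x) = S_{−4,−1}(xq); S_{0,0}(x) = S_{−2,−1}(xq). -/

import Mathlib

/-!
Substituting `x ↦ qx` multiplies the `(m, n)` summand by `q^(2m+n)`, so it shifts `(C1, C2)` by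
`(2, 1)`. The summands of `S_{a,b} - S_{a,b+1}` carry a factor `1 - q^n` that cancels the
last factor of `(q;q)_n`, and shifting `n` down by one gives
`S_{a,b} = S_{a,b+1} + x q^(b+2) S_{a+2,b+2}`; in the same way the factor `1 - q^(2m)` gives
`S_{a,b} = S_{a+2,b} + x² q^(a+6) S_{a+6,b+2}`. The system is a specialisation of these three
rules.
-/

noncomputable section

/-- Base coefficient ring: formal Laurent series over ℚ (a field), so that
integer powers of `q` and inverses of Pochhammer symbols make sense. -/
abbrev R : Type := LaurentSeries ℚ

/-- The formal variable `q`. -/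
def q : R := HahnSeries.single 1 1

/-- The finite q-Pochhammer symbol `(a; b)_n = ∏_{j=1}^n (1 - a b^(j-1))`. -/
def poch (a b : R) (n : ℕ) : R := ∏ j ∈ Finset.range n, (1 - a * b ^ j)

/-- Formal substitution `x ↦ c·x` in a power series in `x` over `R`. -/
def subst (c : R) (f : PowerSeries R) : PowerSeries R :=
  PowerSeries.mk fun k => c ^ k * PowerSeries.coeff k f

/-- `S_{C1,C2}(x) = Σ_{m,n} q^{6C(m+1,2)+2C(n+1,2)+2mn+C1 m+C2 n} x^{2m+n}
/((q²;q²)_m (q;q)_n)`, as a power series in `x` over `R`. -/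
def S (C1 C2 : ℤ) : PowerSeries R :=
  PowerSeries.mk fun k =>
    ∑ p ∈ (Finset.range (k+1) ×ˢ Finset.range (k+1)).filter
        (fun p => 2 * p.1 + p.2 = k),
      q ^ (6 * ((p.1+1).choose 2 : ℤ) + 2 * ((p.2+1).choose 2 : ℤ)
            + 2 * (p.1 : ℤ) * (p.2 : ℤ) + C1 * (p.1 : ℤ) + C2 * (p.2 : ℤ))
        * (poch (q ^ 2) (q ^ 2) p.1)⁻¹ * (poch q q p.2)⁻¹

section WeightedSeries

open PowerSeries

variable {A : Type*} [Semiring A]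

def weightedAntidiagonal (k : ℕ) : Finset (ℕ × ℕ) :=
  (Finset.range (k+1) ×ˢ Finset.range (k+1)).filter (fun p => 2 * p.1 + p.2 = k)

@[simp]
lemma mem_weightedAntidiagonal {k : ℕ} {p : ℕ × ℕ} :
    p ∈ weightedAntidiagonal k ↔ 2 * p.1 + p.2 = k := by
  simp only [weightedAntidiagonal, Finset.mem_filter, Finset.mem_product, Finset.mem_range]
  omega

/-- The power series `∑_{m,n} f m n x^(2m+n)`. -/
def weightedSeries (f : ℕ → ℕ → A) : PowerSeries A :=
  mk fun k => ∑ p ∈ weightedAntidiagonal k, f p.1 p.2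

lemma coeff_weightedSeries (f : ℕ → ℕ → A) (k : ℕ) :
    coeff k (weightedSeries f) = ∑ p ∈ weightedAntidiagonal k, f p.1 p.2 :=
  coeff_mk _ _

lemma C_mul_weightedSeries (c : A) (f : ℕ → ℕ → A) :
    C c * weightedSeries f = weightedSeries fun m n => c * f m n := by
  ext k : 1
  simp only [coeff_C_mul, coeff_weightedSeries, Finset.mul_sum]

lemma weightedSeries_eq_X_pow_mul {f : ℕ → ℕ → A} (i j : ℕ)
    (hf : ∀ m n, m < i ∨ n < j → f m n = 0) :
    weightedSeries f = X ^ (2 * i + j) * weightedSeries fun m n => f (m + i) (n + j) := by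
  ext k : 1
  rw [coeff_X_pow_mul', coeff_weightedSeries]
  split_ifs with hk
  · rw [coeff_weightedSeries]
    symm
    refine Finset.sum_bij_ne_zero (fun p _ _ => (p.1 + i, p.2 + j)) ?_ ?_ ?_ ?_
    · intro p hp _
      rw [mem_weightedAntidiagonal] at hp ⊢
      omega
    · intro p _ _ p' _ _ h
      simp only [Prod.mk.injEq, add_left_inj] at h
      exact Prod.ext h.1 h.2
    · intro p hp hne
      have hij : i ≤ p.1 ∧ j ≤ p.2 := by
        by_contra h
        exact hne (hf _ _ (by omega))
      refine ⟨(p.1 - i, p.2 - j), by rw [mem_weightedAntidiagonal] at hp ⊢; omega, ?_,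
        Prod.ext (Nat.sub_add_cancel hij.1) (Nat.sub_add_cancel hij.2)⟩
      simpa [Nat.sub_add_cancel hij.1, Nat.sub_add_cancel hij.2] using hne
    · intros; rfl
  · refine Finset.sum_eq_zero fun p hp => hf _ _ ?_
    rw [mem_weightedAntidiagonal] at hp
    omega

end WeightedSeries

lemma weightedSeries_sub {A : Type*} [Ring A] (f g : ℕ → ℕ → A) :
    weightedSeries f - weightedSeries g = weightedSeries fun m n => f m n - g m n := by
  ext k : 1
  simp only [map_sub, coeff_weightedSeries, Finset.sum_sub_distrib]

lemma subst_weightedSeries (c : R) (f : ℕ → ℕ → R) :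
    subst c (weightedSeries f) = weightedSeries fun m n => c ^ (2 * m + n) * f m n := by
  refine PowerSeries.ext fun k => ?_
  rw [subst, PowerSeries.coeff_mk, coeff_weightedSeries, coeff_weightedSeries, Finset.mul_sum]
  refine Finset.sum_congr rfl fun p hp => ?_
  rw [mem_weightedAntidiagonal.mp hp]

lemma q_ne_zero : q ≠ 0 := by
  intro h
  simpa [q] using congrArg (HahnSeries.coeff · 1) h

lemma one_sub_q_pow_ne_zero {n : ℕ} (hn : n ≠ 0) : 1 - q ^ n ≠ 0 := by
  intro h
  have h0 := congrArg (HahnSeries.coeff · 0) h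
  simp [q, HahnSeries.single_pow, eq_comm (a := (0 : ℤ)), hn] at h0

lemma poch_succ (a b : R) (n : ℕ) : poch a b (n + 1) = poch a b n * (1 - a * b ^ n) :=
  Finset.prod_range_succ _ _

def summandExponent (a b : ℤ) (m n : ℕ) : ℤ :=
  6 * ((m + 1).choose 2 : ℤ) + 2 * ((n + 1).choose 2 : ℤ) + 2 * m * n + a * m + b * n

def summand (a b : ℤ) (m n : ℕ) : R :=
  q ^ summandExponent a b m n * (poch (q ^ 2) (q ^ 2) m)⁻¹ * (poch q q n)⁻¹

lemma S_eq_weightedSeries (a b : ℤ) : S a b = weightedSeries (summand a b) := rfl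

lemma choose_two_succ_succ (n : ℕ) : ((n + 2).choose 2 : ℤ) = (n + 1).choose 2 + (n + 1) := by
  rw [Nat.choose_succ_succ', Nat.choose_one_right]; push_cast; ring

lemma summand_eq_zpow_mul {a b a' b' : ℤ} {m n : ℕ} (k : ℤ)
    (h : summandExponent a' b' m n = k + summandExponent a b m n) :
    summand a' b' m n = q ^ k * summand a b m n := by
  rw [summand, summand, h, zpow_add₀ q_ne_zero]; ring

lemma summand_succ_snd (a b : ℤ) (m n : ℕ) :
    summand a b m (n + 1) * (1 - q ^ (n + 1)) = q ^ (b + 2) * summand (a + 2) (b + 2) m n := by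
  have hexp :
      summandExponent a b m (n + 1) = (b + 2) + summandExponent (a + 2) (b + 2) m n := by
    simp only [summandExponent]; push_cast [choose_two_succ_succ]; ring
  have hne := one_sub_q_pow_ne_zero n.succ_ne_zero
  rw [summand, summand, hexp, zpow_add₀ q_ne_zero, poch_succ, ← pow_succ']
  field_simp

lemma summand_succ_fst (a b : ℤ) (m n : ℕ) :
    summand a b (m + 1) n * (1 - q ^ (2 * m + 2)) = q ^ (a + 6) * summand (a + 6) (b + 2) m n := by
  have hexp :
      summandExponent a b (m + 1) n = (a + 6) + summandExponent (a + 6) (b + 2) m n := by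
    simp only [summandExponent]; push_cast [choose_two_succ_succ]; ring
  have hne := one_sub_q_pow_ne_zero (show 2 * m + 2 ≠ 0 by omega)
  rw [summand, summand, hexp, zpow_add₀ q_ne_zero, poch_succ, ← pow_mul,
    show q ^ 2 * q ^ (2 * m) = q ^ (2 * m + 2) by ring]
  field_simp

lemma subst_q_S (a b : ℤ) : subst q (S a b) = S (a + 2) (b + 1) := by
  have hshift (m n : ℕ) : summand (a + 2) (b + 1) m n = q ^ (2 * m + n) * summand a b m n := by
    rw [← zpow_natCast]
    exact summand_eq_zpow_mul _ (by simp only [summandExponent]; push_cast; ring)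
  rw [S_eq_weightedSeries, S_eq_weightedSeries, subst_weightedSeries]
  congr 1; funext m n
  exact (hshift m n).symm

lemma S_eq_add_X_mul (a b : ℤ) :
    S a b = S a (b + 1) + PowerSeries.X * PowerSeries.C (q ^ (b + 2)) * S (a + 2) (b + 2) := by
  have hshift (m n : ℕ) : summand a (b + 1) m n = q ^ n * summand a b m n :=
    summand_eq_zpow_mul (n : ℤ) (by simp only [summandExponent]; ring)
  rw [← sub_eq_iff_eq_add', S_eq_weightedSeries, S_eq_weightedSeries, S_eq_weightedSeries,
    weightedSeries_sub,
    weightedSeries_eq_X_pow_mul 0 1 (by intro m n h; simp [hshift, show n = 0 by omega]),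
    Nat.mul_zero, Nat.zero_add, pow_one, mul_assoc, C_mul_weightedSeries]
  congr 2; funext m n
  rw [add_zero, hshift, ← summand_succ_snd]; ring

lemma S_eq_add_X_sq_mul (a b : ℤ) :
    S a b = S (a + 2) b + PowerSeries.X ^ 2 * PowerSeries.C (q ^ (a + 6)) * S (a + 6) (b + 2) := by
  have hshift (m n : ℕ) : summand (a + 2) b m n = q ^ (2 * m) * summand a b m n :=
    summand_eq_zpow_mul ((2 * m : ℕ) : ℤ) (by simp only [summandExponent]; push_cast; ring)
  rw [← sub_eq_iff_eq_add', S_eq_weightedSeries, S_eq_weightedSeries, S_eq_weightedSeries,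
    weightedSeries_sub,
    weightedSeries_eq_X_pow_mul 1 0 (by intro m n h; simp [hshift, show m = 0 by omega]),
    Nat.mul_one, Nat.add_zero, mul_assoc, C_mul_weightedSeries]
  congr 2; funext m n
  rw [add_zero, hshift, ← summand_succ_fst]; ring

theorem functional_equation_system :
    S (-4) (-1) = subst q (S (-4) (-1))
        + PowerSeries.X * PowerSeries.C q * subst q (S (-2) 0)
        + PowerSeries.X ^ 2 * PowerSeries.C (q ^ 2) * subst q (S 0 0) ∧
    S (-2) (-1) = subst q (S (-4) (-1))
        + PowerSeries.X * PowerSeries.C q * subst q (S (-2) 0) ∧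
    S (-2) 0 = subst q (S (-4) (-1)) ∧
    S 0 0 = subst q (S (-2) (-1)) := by
  have hsnd := S_eq_add_X_mul (-2) (-1)
  have hfst := S_eq_add_X_sq_mul (-4) (-1)
  simp only [subst_q_S]
  norm_num at hsnd hfst ⊢
  exact ⟨by rw [hfst, hsnd], hsnd⟩
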